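/- arXiv:1409.0871 — 3 statements merged into one kernel-verified Lean document; each statement's English description precedes it below -/
import Mathlib

section
/- Let O : A* → A* be an idempotent function (O ∘ O = O) and L ⊆ A* a language. Then O(L) ⊆ L if and only if the set φ_O = { w ∈ L | O(w) ≠ w } is opaque in L for O, i.e., O(φ_O) ⊆ O(L \ φ_O). -/
/-! Points of `L` outside `φ = {w ∈ L | O w ≠ w}` are fixed by `O`, so `O(L \ φ) = L \ φ` and
`O(L) ⊆ L` reduces to `O(φ) ⊆ L`. By idempotence every point of `O(φ)` is fixed, so it lies in `L`
exactly when it lies in `L \ φ`. -/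

namespace Set

variable {α : Type*} (f : α → α) (L : Set α)

theorem image_diff_sep_ne_self :
    f '' (L \ {w ∈ L | f w ≠ w}) = L \ {w ∈ L | f w ≠ w} := by
  refine image_congr (fun w hw ↦ ?_) |>.trans (image_id _)
  by_contra hne
  exact hw.2 ⟨hw.1, hne⟩

theorem image_subset_self_iff_image_sep_ne_subset :
    f '' L ⊆ L ↔ f '' {w ∈ L | f w ≠ w} ⊆ L := by
  have hsplit : f '' L = f '' {w ∈ L | f w ≠ w} ∪ (L \ {w ∈ L | f w ≠ w}) := by
    rw [← image_diff_sep_ne_self, ← image_union, union_sdiff_cancel (sep_subset _ _)]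
  rw [hsplit, union_subset_iff]
  exact and_iff_left sdiff_subset

theorem image_subset_iff_subset_diff_sep_ne_of_idem (hf : ∀ w, f (f w) = f w) (S : Set α) :
    f '' S ⊆ L ↔ f '' S ⊆ L \ {w ∈ L | f w ≠ w} := by
  refine ⟨fun h ↦ ?_, fun h ↦ h.trans sdiff_subset⟩
  rintro _ ⟨w, hw, rfl⟩
  exact ⟨h ⟨w, hw, rfl⟩, fun hne ↦ hne.2 (hf w)⟩

end Set

/-- For idempotent O, O(L) ⊆ L iff φ_O = {w ∈ L | O w ≠ w} is opaque in L for O. -/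
theorem stmt1 {A : Type*} (O : List A → List A) (hidem : ∀ w, O (O w) = O w)
    (L : Set (List A)) :
    O '' L ⊆ L ↔
      O '' {w ∈ L | O w ≠ w} ⊆ O '' (L \ {w ∈ L | O w ≠ w}) := by
  rw [Set.image_subset_self_iff_image_sep_ne_subset, Set.image_diff_sep_ne_self]
  exact Set.image_subset_iff_subset_diff_sep_ne_of_idem O L hidem _
end

section
/- Let {W_σ}_{σ ∈ Σ} be a partition of A*, let O = ⋃_σ O_σ where each O_σ is a function with domain W_σ, and suppose O_σ(W_σ) ⊆ W_σ for every σ. Then for any language L and secret φ ⊆ L, φ is opaque in L for O if and only if for every σ, φ ∩ W_σ is opaque in L ∩ W_σ for O_σ. -/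
/-!
If every view `O_σ` maps its cell `W_σ` into itself, then so does `O`, and since the cells
partition the words, `O⁻¹(W_σ) = W_σ`. Hence `O(S) ∩ W_σ = O_σ(S ∩ W_σ)` for every language `S`,
and an inclusion of images holds iff it holds inside every cell.
-/

open Set Function

namespace Set

variable {α ι : Type*} {W : ι → Set α}

theorem subset_iff_forall_inter_subset_inter (hcover : ⋃ i, W i = univ) {s t : Set α} :
    s ⊆ t ↔ ∀ i, s ∩ W i ⊆ t ∩ W i := by
  refine ⟨fun h i => inter_subset_inter_left _ h, fun h x hx => ?_⟩
  obtain ⟨i, hi⟩ := mem_iUnion.mp (hcover ▸ mem_univ x)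
  exact (h i ⟨hx, hi⟩).1

theorem preimage_eq_of_forall_mapsTo (hcover : ⋃ i, W i = univ)
    (hdisj : Pairwise (Disjoint on W)) {f : α → α} (hf : ∀ i, MapsTo f (W i) (W i)) (i : ι) :
    f ⁻¹' W i = W i := by
  refine Subset.antisymm (fun x hfx => ?_) (hf i)
  obtain ⟨j, hj⟩ := mem_iUnion.mp (hcover ▸ mem_univ x)
  obtain rfl : j = i := by
    by_contra hne
    exact (hdisj hne).le_bot ⟨hf j hj, hfx⟩
  exact hj

theorem image_inter_eq_of_preimage_eq {f : α → α} {w : Set α} (hw : f ⁻¹' w = w) (s : Set α) :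
    f '' s ∩ w = f '' (s ∩ w) := by
  conv_rhs => rw [← hw]
  exact (image_inter_preimage f s w).symm

end Set

theorem stmt2_general {A : Type*} {ι : Type*} (W : ι → Set (List A))
    (hdisj : ∀ σ₁ σ₂, σ₁ ≠ σ₂ → Disjoint (W σ₁) (W σ₂))
    (hcover : (⋃ σ, W σ) = Set.univ)
    (Oσ : ι → List A → List A) (O : List A → List A)
    (hO : ∀ σ, ∀ w ∈ W σ, O w = Oσ σ w)
    (hinto : ∀ σ, Oσ σ '' W σ ⊆ W σ)
    (L φ : Set (List A)) :
    O '' φ ⊆ O '' (L \ φ) ↔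
      ∀ σ, Oσ σ '' (φ ∩ W σ) ⊆ Oσ σ '' ((L ∩ W σ) \ (φ ∩ W σ)) := by
  have hEqOn : ∀ σ, EqOn O (Oσ σ) (W σ) := hO
  have hmaps : ∀ σ, MapsTo O (W σ) (W σ) := fun σ =>
    (hEqOn σ).mapsTo_iff.2 (mapsTo_iff_image_subset.2 (hinto σ))
  have hpre := preimage_eq_of_forall_mapsTo hcover hdisj hmaps
  rw [subset_iff_forall_inter_subset_inter hcover]
  refine forall_congr' fun σ => ?_
  rw [image_inter_eq_of_preimage_eq (hpre σ), image_inter_eq_of_preimage_eq (hpre σ),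
    ← inter_sdiff_distrib_right, ((hEqOn σ).mono inter_subset_right).image_eq,
    ((hEqOn σ).mono inter_subset_right).image_eq]

/-- Opacity for a piecewise observer w.r.t. a partition decomposes viewwise. -/
theorem stmt2 {A : Type*} {ι : Type*} (W : ι → Set (List A))
    (hdisj : ∀ σ₁ σ₂, σ₁ ≠ σ₂ → Disjoint (W σ₁) (W σ₂))
    (hcover : (⋃ σ, W σ) = Set.univ)
    (Oσ : ι → List A → List A) (O : List A → List A)
    (hO : ∀ σ, ∀ w ∈ W σ, O w = Oσ σ w)
    (hinto : ∀ σ, Oσ σ '' W σ ⊆ W σ)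
    (L φ : Set (List A)) (hφ : φ ⊆ L) :
    O '' φ ⊆ O '' (L \ φ) ↔
      ∀ σ, Oσ σ '' (φ ∩ W σ) ⊆ Oσ σ '' ((L ∩ W σ) \ (φ ∩ W σ)) :=
  stmt2_general W hdisj hcover Oσ O hO hinto L φ
end

section
/- Let V, C, D partition the alphabet A and π_{V,D} be the projection on V unless D. A language L ⊆ A* satisfies intransitive non-interference (π_{V,D}(L) ⊆ L) if and only if the set φ = { w ∈ L | π_{V,D}(w) ≠ w } is opaque in L for π_{V,D}. -/
/-!
The projection π is idempotent: after a letter of `D` the whole prefix is kept, and letters of `V`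
and `C` act on π u as they act on u. For an idempotent f, `L \ φ` is the set of fixed points of f in
`L`, and every `f w` is a fixed point; so both `f '' L ⊆ L` and the opacity of `φ` say that `f w ∈ L`
for each `w ∈ L` (for `w ∉ φ` this is trivial, as then `f w = w`).
-/

open Set

def IsOpaque {α β : Type*} (O : α → β) (φ L : Set α) : Prop :=
  O '' φ ⊆ O '' (L \ φ)

theorem image_subset_iff_isOpaque_of_idempotent {α : Type*} {f : α → α}
    (hf : ∀ x, f (f x) = f x) (L : Set α) :
    f '' L ⊆ L ↔ IsOpaque f {w ∈ L | f w ≠ w} L := by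
  have mem_diff_iff : ∀ w, w ∈ L \ {w ∈ L | f w ≠ w} ↔ w ∈ L ∧ f w = w := fun w => by
    simp only [mem_sdiff, mem_ofPred_eq]
    tauto
  constructor
  · rintro hL _ ⟨x, hx, rfl⟩
    exact ⟨f x, (mem_diff_iff _).2 ⟨hL ⟨x, hx.1, rfl⟩, hf x⟩, hf x⟩
  · rintro hopaque _ ⟨x, hx, rfl⟩
    by_cases hfix : f x = x
    · rwa [hfix]
    · obtain ⟨v, hv, hvx⟩ := hopaque ⟨x, ⟨hx, hfix⟩, rfl⟩
      obtain ⟨hvL, hvfix⟩ := (mem_diff_iff v).1 hv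
      rwa [← hvx, hvfix]

theorem projection_idempotent {A : Type*} {V C D : Set A} (hcover : V ∪ C ∪ D = univ)
    {π : List A → List A} (hnil : π [] = [])
    (hD : ∀ (u : List A) (a : A), a ∈ D → π (u ++ [a]) = u ++ [a])
    (hV : ∀ (u : List A) (a : A), a ∈ V → π (u ++ [a]) = π u ++ [a])
    (hC : ∀ (u : List A) (a : A), a ∈ C → π (u ++ [a]) = π u) (u : List A) :
    π (π u) = π u := by
  induction u using List.reverseRecOn with
  | nil => rw [hnil, hnil]
  | append_singleton u a ih =>
    rcases hcover ▸ mem_univ a with (ha | ha) | ha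
    · rw [hV u a ha, hV (π u) a ha, ih]
    · rw [hC u a ha, ih]
    · rw [hD u a ha, hD u a ha]

theorem stmt7_general {A : Type*} (V C D : Set A)
    (hcover : V ∪ C ∪ D = Set.univ)
    (π : List A → List A)
    (hnil : π [] = [])
    (hD : ∀ (u : List A) (a : A), a ∈ D → π (u ++ [a]) = u ++ [a])
    (hV : ∀ (u : List A) (a : A), a ∈ V → π (u ++ [a]) = π u ++ [a])
    (hC : ∀ (u : List A) (a : A), a ∈ C → π (u ++ [a]) = π u)
    (L : Set (List A)) :
    π '' L ⊆ L ↔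
      π '' {w ∈ L | π w ≠ w} ⊆ π '' (L \ {w ∈ L | π w ≠ w}) :=
  image_subset_iff_isOpaque_of_idempotent (projection_idempotent hcover hnil hD hV hC) L

/-- L satisfies INI (π_{V,D}(L) ⊆ L) iff
φ = {w ∈ L | π_{V,D}(w) ≠ w} is opaque in L for π_{V,D}. -/
theorem stmt7 {A : Type*} (V C D : Set A)
    (hcover : V ∪ C ∪ D = Set.univ)
    (hVC : Disjoint V C) (hVD : Disjoint V D) (hCD : Disjoint C D)
    (π : List A → List A)
    (hnil : π [] = [])
    (hD : ∀ (u : List A) (a : A), a ∈ D → π (u ++ [a]) = u ++ [a])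
    (hV : ∀ (u : List A) (a : A), a ∈ V → π (u ++ [a]) = π u ++ [a])
    (hC : ∀ (u : List A) (a : A), a ∈ C → π (u ++ [a]) = π u)
    (L : Set (List A)) :
    π '' L ⊆ L ↔
      π '' {w ∈ L | π w ≠ w} ⊆ π '' (L \ {w ∈ L | π w ≠ w}) :=
  stmt7_general V C D hcover π hnil hD hV hC L
end
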